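/- Let f: ℝ² → ℝ be twice continuously differentiable with ∂_xx f + ∂_yy f = 0 everywhere (f is harmonic), 2π-periodic in the second variable (f(x, y + 2π) = f(x, y) for all (x,y)), and of at most linear growth: there exist A, B ≥ 0 such that |f(x,y)| ≤ A + B·|x| for all (x,y). Then there exist constants c₁, c₂ ∈ ℝ such that f(x,y) = c₁ + c₂·x for all (x,y) ∈ ℝ². -/

import Mathlib

/-!
Averaging over a period, `M x = ∫₀^{2π} f x y dy` satisfies `M'' = -∫ ∂ᵧ²f dy = 0`, so `M` is
affine. The remainder `h = f - M / 2π` is harmonic, periodic and has mean zero on every circle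
`{x} × [0, 2π]`. Integrating by parts in `y`, its energy `φ x = ∫ h² dy` satisfies
`φ'' = 2 ∫ (∂ₓh)² + 2 ∫ (∂ᵧh)² ≥ φ / (2π)²`, the last step being the Poincaré inequality for
mean-zero functions. A nonnegative `φ` with `φ'' ≥ k² φ` either vanishes or grows exponentially
in one direction, and linear growth of `f` only allows quadratic growth of `φ`; hence `h = 0`.
-/

open Real Set Filter MeasureTheory Function Asymptotics

theorem deriv_deriv_sq {ψ : ℝ → ℝ} (hψ : ContDiff ℝ 2 ψ) (x : ℝ) :
    deriv (deriv fun s => ψ s ^ 2) x = 2 * deriv ψ x ^ 2 + 2 * ψ x * deriv (deriv ψ) x := by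
  have hψ1 : Differentiable ℝ ψ := hψ.differentiable (by norm_num)
  have hψ2 : Differentiable ℝ (deriv ψ) := hψ.deriv'.differentiable one_ne_zero
  have hfirst : deriv (fun s => ψ s ^ 2) = fun s => 2 * ψ s * deriv ψ s := funext fun s =>
    ((hψ1 s).hasDerivAt.pow 2).deriv.trans (by ring)
  rw [hfirst]
  exact (((hψ1 x).hasDerivAt.const_mul 2).mul (hψ2 x).hasDerivAt).deriv.trans (by ring)

theorem deriv_deriv_sub_affine {ψ : ℝ → ℝ} (hψ : Differentiable ℝ ψ) (a b : ℝ) :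
    deriv (deriv fun s => ψ s - (a + b * s)) = deriv (deriv ψ) := by
  have hfirst : deriv (fun s => ψ s - (a + b * s)) = fun s => deriv ψ s - b := funext fun s =>
    ((hψ s).hasDerivAt.sub (((hasDerivAt_id' s).const_mul b).const_add a)).deriv.trans
      (by rw [mul_one])
  rw [hfirst]
  exact funext fun s => deriv_sub_const b

theorem deriv_deriv_sub_const (ψ : ℝ → ℝ) (c : ℝ) :
    deriv (deriv fun s => ψ s - c) = deriv (deriv ψ) := by
  rw [show deriv (fun s => ψ s - c) = deriv ψ from funext fun _ => deriv_sub_const c]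

theorem eq_add_mul_of_hasDerivAt_of_hasDerivAt_zero {M M' : ℝ → ℝ}
    (hM : ∀ x, HasDerivAt M (M' x) x) (hM' : ∀ x, HasDerivAt M' 0 x) (x : ℝ) :
    M x = M 0 + M' 0 * x := by
  have hslope : ∀ x, M' x = M' 0 := fun x =>
    is_const_of_deriv_eq_zero (fun x => (hM' x).differentiableAt) (fun x => (hM' x).deriv) x 0
  have hline : ∀ x, HasDerivAt (fun x => M x - M' 0 * x) 0 x := fun x =>
    ((hM x).sub ((hasDerivAt_id' x).const_mul (M' 0))).congr_deriv (by rw [hslope]; ring)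
  have := is_const_of_deriv_eq_zero (fun x => (hline x).differentiableAt)
    (fun x => (hline x).deriv) x 0
  simp only [mul_zero, sub_zero] at this
  linarith

theorem abs_integral_le_integral_abs_of_mem_Icc {f : ℝ → ℝ} {a b y z : ℝ} (hab : a ≤ b)
    (hf : IntervalIntegrable f volume a b) (hz : z ∈ Icc a b) (hy : y ∈ Icc a b) :
    |∫ t in z..y, f t| ≤ ∫ t in a..b, |f t| := by
  have hsub : uIoc z y ⊆ uIoc a b := uIoc_subset_uIoc_of_uIcc_subset_uIcc
    (uIcc_subset_uIcc (by rwa [uIcc_of_le hab]) (by rwa [uIcc_of_le hab]))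
  calc |∫ t in z..y, f t| ≤ |(∫ t in z..y, |f t|)| := by
        simpa only [Real.norm_eq_abs] using
          intervalIntegral.norm_integral_le_abs_integral_norm (f := f) (a := z) (b := y)
    _ ≤ |(∫ t in a..b, |f t|)| :=
        intervalIntegral.abs_integral_mono_interval hsub (.of_forall fun t => abs_nonneg _) hf.abs
    _ = ∫ t in a..b, |f t| :=
        abs_of_nonneg (intervalIntegral.integral_nonneg hab fun t _ => abs_nonneg _)

theorem abs_le_integral_abs_deriv_of_integral_eq_zero {g : ℝ → ℝ} {a b : ℝ} (hab : a < b)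
    (hg : ContDiff ℝ 1 g) (hmean : ∫ z in a..b, g z = 0) {y : ℝ} (hy : y ∈ Icc a b) :
    |g y| ≤ ∫ z in a..b, |deriv g z| := by
  have hderiv : Continuous (deriv g) := hg.continuous_deriv le_rfl
  have hoscillation : ∀ z ∈ Icc a b, |g y - g z| ≤ ∫ z in a..b, |deriv g z| := fun z hz => by
    rw [← intervalIntegral.integral_deriv_eq_sub (fun t _ => hg.differentiable one_ne_zero t)
      (hderiv.intervalIntegrable z y)]
    exact abs_integral_le_integral_abs_of_mem_Icc hab.le (hderiv.intervalIntegrable a b) hz hy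
  have hmean_sub : (b - a) * g y = ∫ z in a..b, (g y - g z) := by
    rw [intervalIntegral.integral_sub intervalIntegrable_const
      (hg.continuous.intervalIntegrable a b), hmean, intervalIntegral.integral_const]
    simp
  have := intervalIntegral.norm_integral_le_of_norm_le_const (a := a) (b := b)
    (f := fun z => g y - g z) fun z hz =>
    hoscillation z (Ioc_subset_Icc_self (by rwa [uIoc_of_le hab.le] at hz))
  rw [← hmean_sub, norm_mul, Real.norm_eq_abs, Real.norm_eq_abs, abs_of_pos (sub_pos.2 hab),
    mul_comm] at this
  exact le_of_mul_le_mul_right this (sub_pos.2 hab)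

theorem sq_integral_mul_le_integral_sq_mul_integral_sq {u v : ℝ → ℝ} {a b : ℝ} (hab : a ≤ b)
    (hu : Continuous u) (hv : Continuous v) :
    (∫ y in a..b, u y * v y) ^ 2 ≤ (∫ y in a..b, u y ^ 2) * ∫ y in a..b, v y ^ 2 := by
  have hint : ∀ w : ℝ → ℝ, Continuous w → IntervalIntegrable w volume a b :=
    fun w hw => hw.intervalIntegrable a b
  have hquadratic : ∀ t : ℝ, 0 ≤ (∫ y in a..b, v y ^ 2) * (t * t)
      + (-2 * ∫ y in a..b, u y * v y) * t + ∫ y in a..b, u y ^ 2 := fun t => by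
    have hexpand : ∫ y in a..b, (u y - t * v y) ^ 2
        = ∫ y in a..b, (u y ^ 2 + -2 * t * (u y * v y) + t * t * v y ^ 2) :=
      intervalIntegral.integral_congr fun y _ => by ring
    rw [intervalIntegral.integral_add (hint _ (by fun_prop)) (hint _ (by fun_prop)),
      intervalIntegral.integral_add (hint _ (by fun_prop)) (hint _ (by fun_prop)),
      intervalIntegral.integral_const_mul, intervalIntegral.integral_const_mul] at hexpand
    linarith [intervalIntegral.integral_nonneg (μ := volume) hab
      fun y _ => sq_nonneg (u y - t * v y)]
  have := discrim_le_zero hquadratic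
  rw [discrim] at this
  linarith

theorem integral_sq_le_of_integral_eq_zero {g : ℝ → ℝ} {a b : ℝ} (hab : a < b)
    (hg : ContDiff ℝ 1 g) (hmean : ∫ z in a..b, g z = 0) :
    ∫ y in a..b, g y ^ 2 ≤ (b - a) ^ 2 * ∫ y in a..b, deriv g y ^ 2 := by
  have hderiv : Continuous (deriv g) := hg.continuous_deriv le_rfl
  set I := ∫ z in a..b, |deriv g z|
  have hsup : ∫ y in a..b, g y ^ 2 ≤ (b - a) * I ^ 2 := by
    have := intervalIntegral.integral_mono_on (μ := volume) hab.le
      ((hg.continuous.pow 2).intervalIntegrable a b) intervalIntegrable_const fun y hy =>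
        sq_le_sq' (abs_le.1 (abs_le_integral_abs_deriv_of_integral_eq_zero hab hg hmean hy)).1
          (abs_le.1 (abs_le_integral_abs_deriv_of_integral_eq_zero hab hg hmean hy)).2
    simpa using this
  have hcauchy : I ^ 2 ≤ (b - a) * ∫ y in a..b, deriv g y ^ 2 := by
    have := sq_integral_mul_le_integral_sq_mul_integral_sq hab.le hderiv.abs continuous_const
      (v := fun _ => (1 : ℝ))
    simp only [mul_one, one_pow, sq_abs, intervalIntegral.integral_const, smul_eq_mul] at this
    linarith
  calc ∫ y in a..b, g y ^ 2 ≤ (b - a) * I ^ 2 := hsup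
    _ ≤ (b - a) * ((b - a) * ∫ y in a..b, deriv g y ^ 2) :=
        mul_le_mul_of_nonneg_left hcauchy (sub_pos.2 hab).le
    _ = (b - a) ^ 2 * ∫ y in a..b, deriv g y ^ 2 := by ring

theorem Function.Periodic.deriv {𝕜 F : Type*} [NontriviallyNormedField 𝕜] [NormedAddCommGroup F]
    [NormedSpace 𝕜 F] {g : 𝕜 → F} {T : 𝕜} (hg : Periodic g T) : Periodic (deriv g) T := fun y => by
  rw [← deriv_comp_add_const, show (fun s => g (s + T)) = g from funext hg]

theorem integral_deriv_eq_zero_of_periodic {E : Type*} [NormedAddCommGroup E]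
    [NormedSpace ℝ E] [CompleteSpace E] {g : ℝ → E} {T : ℝ} (hg : Periodic g T)
    (hdiff : ContDiff ℝ 1 g) : ∫ y in 0..T, deriv g y = 0 := by
  rw [intervalIntegral.integral_deriv_eq_sub (fun y _ => hdiff.differentiable one_ne_zero y)
    ((hdiff.continuous_deriv le_rfl).intervalIntegrable 0 T), hg.eq, sub_self]

theorem integral_mul_deriv_deriv_of_periodic {g : ℝ → ℝ} {T : ℝ} (hg : Periodic g T)
    (hdiff : ContDiff ℝ 2 g) :
    ∫ y in 0..T, g y * deriv (deriv g) y = -∫ y in 0..T, deriv g y ^ 2 := by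
  have hg1 : ContDiff ℝ 1 g := hdiff.of_le (by norm_num)
  have hderiv : deriv (fun y => g y * deriv g y)
      = fun y => deriv g y ^ 2 + g y * deriv (deriv g) y := funext fun y =>
    ((hg1.differentiable one_ne_zero y).hasDerivAt.mul
      (hdiff.deriv'.differentiable one_ne_zero y).hasDerivAt).deriv.trans (by ring)
  have := integral_deriv_eq_zero_of_periodic (g := fun y => g y * deriv g y) (hg.mul hg.deriv)
    (hg1.mul hdiff.deriv')
  rw [hderiv, intervalIntegral.integral_add (f := fun y => deriv g y ^ 2)
    (g := fun y => g y * deriv (deriv g) y)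
    (((hg1.continuous_deriv le_rfl).pow 2).intervalIntegrable 0 T)
    ((hg1.continuous.mul (hdiff.deriv'.continuous_deriv le_rfl)).intervalIntegrable 0 T)] at this
  linarith

theorem eq_zero_of_periodic_of_integral_sq_eq_zero {g : ℝ → ℝ} {T : ℝ} (hg : Periodic g T)
    (hT : 0 < T) (hc : Continuous g) (hzero : ∫ y in 0..T, g y ^ 2 = 0) (y : ℝ) : g y = 0 := by
  obtain ⟨z, hz, hyz⟩ := hg.exists_mem_Ico₀ hT y
  rw [hyz]
  by_contra! hne
  exact (intervalIntegral.integral_pos hT (hc.pow 2).continuousOn (fun _ _ => sq_nonneg _)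
    ⟨z, Ico_subset_Icc_self hz, show 0 < g z ^ 2 by positivity⟩).ne' hzero

theorem nonpos_of_mul_le_deriv_of_eventually_le_mul_pow {g g' : ℝ → ℝ} {k C : ℝ} {n : ℕ}
    (hk : 0 < k) (hg : ∀ x, HasDerivAt g (g' x) x) (hle : ∀ x, k * g x ≤ g' x)
    (hgrowth : ∀ᶠ x in atTop, g x ≤ C * x ^ n) (x₀ : ℝ) : g x₀ ≤ 0 := by
  by_contra! hpos
  have hweighted : ∀ x, HasDerivAt (fun x => exp (-k * x) * g x)
      (exp (-k * x) * (g' x - k * g x)) x := fun x =>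
    ((((hasDerivAt_id' x).const_mul (-k)).exp).mul (hg x)).congr_deriv (by ring)
  have hmono : Monotone fun x => exp (-k * x) * g x :=
    monotone_of_deriv_nonneg (fun x => (hweighted x).differentiableAt) fun x => by
      rw [(hweighted x).deriv]; exact mul_nonneg (exp_nonneg _) (by linarith [hle x])
  set a := exp (-k * x₀) * g x₀
  have ha : 0 < a := by positivity
  have hlower : ∀ x, x₀ ≤ x → a * exp (k * x) ≤ g x := fun x hx => by
    calc a * exp (k * x) ≤ exp (-k * x) * g x * exp (k * x) :=
          mul_le_mul_of_nonneg_right (hmono hx) (exp_nonneg _)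
      _ = g x := by rw [mul_right_comm, ← exp_add, neg_mul, neg_add_cancel, exp_zero, one_mul]
  have hbigO : (fun x => exp (k * x)) =O[atTop] fun x => x ^ n := by
    refine IsBigO.of_bound (C / a) ?_
    filter_upwards [hgrowth, eventually_ge_atTop x₀, eventually_ge_atTop 0] with x hx hx₀ hx0
    rw [norm_of_nonneg (exp_nonneg _), norm_of_nonneg (by positivity), div_mul_eq_mul_div,
      le_div_iff₀ ha]
    linarith [hlower x hx₀]
  exact isLittleO_irrefl (.of_forall fun x => (exp_pos _).ne')
    (hbigO.trans_isLittleO (isLittleO_pow_exp_pos_mul_atTop n hk))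

theorem deriv_add_mul_nonpos_of_sq_mul_le_deriv_deriv {φ φ' φ'' : ℝ → ℝ} {k C : ℝ} (hk : 0 < k)
    (hφ : ∀ x, HasDerivAt φ (φ' x) x) (hφ' : ∀ x, HasDerivAt φ' (φ'' x) x)
    (hnonneg : ∀ x, 0 ≤ φ x) (hle : ∀ x, k ^ 2 * φ x ≤ φ'' x)
    (hgrowth : ∀ x, φ x ≤ C * (1 + x ^ 2)) (x : ℝ) : φ' x + k * φ x ≤ 0 := by
  have hC : 0 ≤ C := by nlinarith [hnonneg 0, hgrowth 0]
  have hφ'_mono : Monotone φ' :=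
    monotone_of_deriv_nonneg (fun x => (hφ' x).differentiableAt) fun x => by
      rw [(hφ' x).deriv]; nlinarith [hle x, hnonneg x]
  have hφ'_le : ∀ x, φ' x ≤ φ (x + 1) := fun x => by
    obtain ⟨ξ, hξ, hslope⟩ := exists_hasDerivAt_eq_slope φ φ' (lt_add_one x)
      (fun y _ => (hφ y).continuousAt.continuousWithinAt) fun y _ => hφ y
    rw [add_sub_cancel_left, div_one] at hslope
    linarith [hφ'_mono hξ.1.le, hnonneg x]
  refine nonpos_of_mul_le_deriv_of_eventually_le_mul_pow (g := fun x => φ' x + k * φ x)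
    (g' := fun x => φ'' x + k * φ' x) (C := 5 * C + 2 * k * C) (n := 2) hk
    (fun x => (hφ' x).add ((hφ x).const_mul k)) (fun x => by nlinarith [hle x]) ?_ x
  filter_upwards [eventually_ge_atTop 1] with x hx
  have hshift : C * (1 + (x + 1) ^ 2) ≤ 5 * C * x ^ 2 := by
    nlinarith [mul_nonneg hC (mul_nonneg (sub_nonneg.2 hx) (by linarith : (0 : ℝ) ≤ 4 * x + 2))]
  have hmul : k * φ x ≤ 2 * k * C * x ^ 2 := by
    nlinarith [mul_le_mul_of_nonneg_left (hgrowth x) hk.le, mul_nonneg hk.le hC]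
  linarith [hφ'_le x, hgrowth (x + 1)]

theorem eq_zero_of_sq_mul_le_deriv_deriv {φ φ' φ'' : ℝ → ℝ} {k C : ℝ} (hk : 0 < k)
    (hφ : ∀ x, HasDerivAt φ (φ' x) x) (hφ' : ∀ x, HasDerivAt φ' (φ'' x) x)
    (hnonneg : ∀ x, 0 ≤ φ x) (hle : ∀ x, k ^ 2 * φ x ≤ φ'' x)
    (hgrowth : ∀ x, φ x ≤ C * (1 + x ^ 2)) (x : ℝ) : φ x = 0 := by
  have hright := deriv_add_mul_nonpos_of_sq_mul_le_deriv_deriv hk hφ hφ' hnonneg hle hgrowth x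
  have hleft := deriv_add_mul_nonpos_of_sq_mul_le_deriv_deriv (φ := fun s => φ (-s))
    (φ' := fun s => -φ' (-s)) (φ'' := fun s => φ'' (-s)) hk
    (fun s => ((hφ (-s)).comp s (hasDerivAt_neg s)).congr_deriv (by ring))
    (fun s => ((hφ' (-s)).neg.comp s (hasDerivAt_neg s)).congr_deriv (by ring))
    (fun s => hnonneg (-s)) (fun s => hle (-s)) (fun s => by simpa using hgrowth (-s)) (-x)
  -- together: `k φ ≤ φ' ≤ -k φ`
  simp only [neg_neg] at hleft
  nlinarith [hnonneg x]

theorem ContDiff.uncurry_left {n : WithTop ℕ∞} {u : ℝ → ℝ → ℝ} (x : ℝ)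
    (hu : ContDiff ℝ n (uncurry u)) : ContDiff ℝ n (u x) :=
  hu.comp (contDiff_const.prodMk contDiff_id)

theorem ContDiff.uncurry_right {n : WithTop ℕ∞} {u : ℝ → ℝ → ℝ} (y : ℝ)
    (hu : ContDiff ℝ n (uncurry u)) :
    ContDiff ℝ n fun x => u x y :=
  hu.comp (contDiff_id.prodMk contDiff_const)

theorem contDiff_uncurry_deriv_fst {u : ℝ → ℝ → ℝ} {n : ℕ} (hu : ContDiff ℝ (n + 1) (uncurry u)) :
    ContDiff ℝ n (uncurry fun x y => deriv (fun s => u s y) x) := by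
  have hpartial : (uncurry fun x y => deriv (fun s => u s y) x)
      = fun p => fderiv ℝ (uncurry u) p (1, 0) := funext fun ⟨x, y⟩ => by
    simp only [uncurry_apply_pair]
    exact ((hu.differentiable (by simp) (x, y)).hasFDerivAt.comp_hasDerivAt x
      ((hasDerivAt_id x).prodMk (hasDerivAt_const x y))).deriv
  rw [hpartial]
  exact (hu.fderiv_right le_rfl).clm_apply contDiff_const

theorem hasDerivAt_integral_of_contDiff_uncurry {u : ℝ → ℝ → ℝ} (hu : ContDiff ℝ 1 (uncurry u))
    (a b x₀ : ℝ) :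
    HasDerivAt (fun x => ∫ y in a..b, u x y) (∫ y in a..b, deriv (fun x => u x y) x₀) x₀ := by
  have hpartial : Continuous (uncurry fun x y => deriv (fun s => u s y) x) :=
    (contDiff_uncurry_deriv_fst (n := 0) (by simpa using hu)).continuous
  obtain ⟨C, hC⟩ := (isCompact_closedBall x₀ 1 |>.prod isCompact_uIcc).exists_bound_of_continuousOn
    (f := uncurry fun x y => deriv (fun s => u s y) x) hpartial.continuousOn
  refine (intervalIntegral.hasDerivAt_integral_of_dominated_loc_of_deriv_le
    (bound := fun _ => C) (Metric.closedBall_mem_nhds x₀ one_pos)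
    (.of_forall fun x => (hu.continuous.uncurry_left x).aestronglyMeasurable)
    ((hu.continuous.uncurry_left x₀).intervalIntegrable a b)
    (hpartial.uncurry_left x₀).aestronglyMeasurable
    (.of_forall fun y hy x hx => hC (x, y) ⟨hx, uIoc_subset_uIcc hy⟩) intervalIntegrable_const
    (.of_forall fun y _ x _ => ?_)).2
  exact ((hu.uncurry_right y).differentiable one_ne_zero x).hasDerivAt

theorem exists_integral_eq_affine_of_harmonic {f : ℝ → ℝ → ℝ} {T : ℝ}
    (hreg : ContDiff ℝ 2 (uncurry f))
    (hharm : ∀ x y, deriv (deriv fun s => f s y) x + deriv (deriv fun s => f x s) y = 0)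
    (hper : ∀ x, Periodic (f x) T) :
    ∃ c₁ c₂ : ℝ, ∀ x, ∫ y in 0..T, f x y = c₁ + c₂ * x := by
  have hsecond : ∀ x, HasDerivAt (fun x => ∫ y in 0..T, deriv (fun s => f s y) x) 0 x := fun x => by
    have hzero : ∫ y in 0..T, deriv (deriv fun s => f s y) x = 0 := by
      rw [intervalIntegral.integral_congr (g := fun y => -deriv (deriv (f x)) y)
        fun y _ => eq_neg_of_add_eq_zero_left (hharm x y), intervalIntegral.integral_neg,
        integral_deriv_eq_zero_of_periodic (hper x).deriv (hreg.uncurry_left x).deriv', neg_zero]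
    exact (hasDerivAt_integral_of_contDiff_uncurry
      (contDiff_uncurry_deriv_fst (n := 1) hreg) 0 T x).congr_deriv hzero
  exact ⟨_, _, eq_add_mul_of_hasDerivAt_of_hasDerivAt_zero
    (fun x => hasDerivAt_integral_of_contDiff_uncurry (hreg.of_le one_le_two) 0 T x) hsecond⟩

theorem integral_sq_le_integral_deriv_deriv_sq_of_harmonic {h : ℝ → ℝ → ℝ} {T : ℝ} (hT : 0 < T)
    (hreg : ContDiff ℝ 2 (uncurry h))
    (hharm : ∀ x y, deriv (deriv fun s => h s y) x + deriv (deriv fun s => h x s) y = 0)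
    (hper : ∀ x, Periodic (h x) T) (hmean : ∀ x, ∫ y in 0..T, h x y = 0) (x : ℝ) :
    ∫ y in 0..T, h x y ^ 2 ≤ T ^ 2 * ∫ y in 0..T, deriv (deriv fun s => h s y ^ 2) x := by
  have hslice : ContDiff ℝ 2 (h x) := hreg.uncurry_left x
  have hdx : Continuous fun y => deriv (fun s => h s y) x :=
    (contDiff_uncurry_deriv_fst (n := 1) hreg).continuous.uncurry_left x
  have hdyy : Continuous (deriv (deriv (h x))) := hslice.deriv'.continuous_deriv le_rfl
  -- `∂ₓ² (h²) = 2 (∂ₓh)² - 2 h ∂ᵧ²h`, and `∂ᵧ²` integrates by parts against `h` over a period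
  have henergy : ∫ y in 0..T, deriv (deriv fun s => h s y ^ 2) x
      = 2 * (∫ y in 0..T, deriv (fun s => h s y) x ^ 2) + 2 * ∫ y in 0..T, deriv (h x) y ^ 2 := by
    rw [intervalIntegral.integral_congr (g := fun y => 2 * deriv (fun s => h s y) x ^ 2
        - 2 * (h x y * deriv (deriv (h x)) y)) fun y _ => by
          rw [deriv_deriv_sq (hreg.uncurry_right y), eq_neg_of_add_eq_zero_left (hharm x y)]; ring,
      intervalIntegral.integral_sub (f := fun y => 2 * deriv (fun s => h s y) x ^ 2)
        (g := fun y => 2 * (h x y * deriv (deriv (h x)) y))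
        ((hdx.pow 2).const_mul 2 |>.intervalIntegrable 0 T)
        ((hslice.continuous.mul hdyy).const_mul 2 |>.intervalIntegrable 0 T),
      intervalIntegral.integral_const_mul, intervalIntegral.integral_const_mul,
      integral_mul_deriv_deriv_of_periodic (hper x) hslice]
    ring
  have hpoincare := integral_sq_le_of_integral_eq_zero hT (hslice.of_le one_le_two) (hmean x)
  have hdx_nonneg : 0 ≤ ∫ y in 0..T, deriv (fun s => h s y) x ^ 2 :=
    intervalIntegral.integral_nonneg hT.le fun y _ => sq_nonneg _
  have hdy_nonneg : 0 ≤ ∫ y in 0..T, deriv (h x) y ^ 2 :=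
    intervalIntegral.integral_nonneg hT.le fun y _ => sq_nonneg _
  rw [sub_zero] at hpoincare
  rw [henergy]
  refine hpoincare.trans (mul_le_mul_of_nonneg_left ?_ (sq_nonneg T))
  linarith

theorem eq_zero_of_harmonic_of_integral_eq_zero {h : ℝ → ℝ → ℝ} {T A B : ℝ} (hT : 0 < T)
    (hreg : ContDiff ℝ 2 (uncurry h))
    (hharm : ∀ x y, deriv (deriv fun s => h s y) x + deriv (deriv fun s => h x s) y = 0)
    (hper : ∀ x, Periodic (h x) T) (hgrowth : ∀ x y, |h x y| ≤ A + B * |x|)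
    (hmean : ∀ x, ∫ y in 0..T, h x y = 0) (x y : ℝ) : h x y = 0 := by
  have hsq : ContDiff ℝ 2 (uncurry fun x y => h x y ^ 2) := hreg.pow 2
  have hgrowth_sq : ∀ x y, h x y ^ 2 ≤ 2 * (A ^ 2 + B ^ 2) * (1 + x ^ 2) := fun x y => by
    have := pow_le_pow_left₀ (abs_nonneg _) (hgrowth x y) 2
    rw [sq_abs] at this
    nlinarith [sq_nonneg (A - B * |x|), sq_abs x]
  have henergy := eq_zero_of_sq_mul_le_deriv_deriv (φ := fun x => ∫ y in 0..T, h x y ^ 2)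
    (k := 1 / T) (C := T * (2 * (A ^ 2 + B ^ 2))) (by positivity)
    (hasDerivAt_integral_of_contDiff_uncurry (hsq.of_le one_le_two) 0 T)
    (hasDerivAt_integral_of_contDiff_uncurry (contDiff_uncurry_deriv_fst (n := 1) hsq) 0 T)
    (fun x => intervalIntegral.integral_nonneg hT.le fun y _ => sq_nonneg _)
    (fun x => by
      have := integral_sq_le_integral_deriv_deriv_sq_of_harmonic hT hreg hharm hper hmean x
      rw [div_pow, one_pow, div_mul_eq_mul_div, one_mul, div_le_iff₀ (by positivity)]
      linarith)
    (fun x => by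
      have := intervalIntegral.integral_mono_on (μ := volume) (f := fun y => h x y ^ 2) hT.le
        ((hreg.uncurry_left x).continuous.pow 2 |>.intervalIntegrable 0 T)
        intervalIntegrable_const fun y _ => hgrowth_sq x y
      simp only [intervalIntegral.integral_const, sub_zero, smul_eq_mul] at this
      linarith) x
  exact eq_zero_of_periodic_of_integral_sq_eq_zero (hper x) hT
    (hreg.uncurry_left x).continuous henergy y

theorem eq_affine_of_harmonic_of_integral_eq_affine {f : ℝ → ℝ → ℝ} {T A B c₁ c₂ : ℝ} (hT : 0 < T)
    (hreg : ContDiff ℝ 2 (uncurry f))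
    (hharm : ∀ x y, deriv (deriv fun s => f s y) x + deriv (deriv fun s => f x s) y = 0)
    (hper : ∀ x, Periodic (f x) T) (hgrowth : ∀ x y, |f x y| ≤ A + B * |x|)
    (hmean : ∀ x, ∫ y in 0..T, f x y = T * (c₁ + c₂ * x)) (x y : ℝ) :
    f x y = c₁ + c₂ * x := by
  refine sub_eq_zero.1 (eq_zero_of_harmonic_of_integral_eq_zero
    (h := fun x y => f x y - (c₁ + c₂ * x)) (A := A + |c₁|) (B := B + |c₂|) hT
    (hreg.sub (by fun_prop)) (fun x y => ?_)
    (fun x y => by simp only [hper x y]) (fun x y => ?_) (fun x => ?_) x y)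
  · rw [deriv_deriv_sub_affine ((hreg.uncurry_right y).differentiable two_ne_zero),
      deriv_deriv_sub_const]
    exact hharm x y
  · have := abs_add_le c₁ (c₂ * x)
    rw [abs_mul] at this
    linarith [abs_sub (f x y) (c₁ + c₂ * x), hgrowth x y]
  · rw [intervalIntegral.integral_sub ((hreg.uncurry_left x).continuous.intervalIntegrable 0 T)
      intervalIntegrable_const, hmean x, intervalIntegral.integral_const, smul_eq_mul, sub_zero,
      sub_self]

theorem periodic_harmonic_linear_growth_general
    (f : ℝ → ℝ → ℝ)
    (hreg : ContDiff ℝ 2 (fun p : ℝ × ℝ => f p.1 p.2))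
    (hharm : ∀ x y : ℝ,
      deriv (deriv (fun s => f s y)) x + deriv (deriv (fun s => f x s)) y = 0)
    (hper : ∀ x y : ℝ, f x (y + 2 * π) = f x y)
    (A B : ℝ)
    (hgrowth : ∀ x y : ℝ, |f x y| ≤ A + B * |x|) :
    ∃ c₁ c₂ : ℝ, ∀ x y : ℝ, f x y = c₁ + c₂ * x := by
  have hT : 0 < 2 * π := by positivity
  obtain ⟨c₁, c₂, hmean⟩ := exists_integral_eq_affine_of_harmonic hreg hharm hper
  refine ⟨c₁ / (2 * π), c₂ / (2 * π),
    eq_affine_of_harmonic_of_integral_eq_affine hT hreg hharm hper hgrowth fun x => ?_⟩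
  rw [hmean]
  field_simp

/-- A `2π`-periodic (in the second variable) harmonic function on `ℝ²` with at most
linear growth `|f(x,y)| ≤ A + B|x|` is of the form `f(x,y) = c₁ + c₂·x`. -/
theorem periodic_harmonic_linear_growth
    (f : ℝ → ℝ → ℝ)
    (hreg : ContDiff ℝ 2 (fun p : ℝ × ℝ => f p.1 p.2))
    (hharm : ∀ x y : ℝ,
      deriv (deriv (fun s => f s y)) x + deriv (deriv (fun s => f x s)) y = 0)
    (hper : ∀ x y : ℝ, f x (y + 2 * π) = f x y)
    (A B : ℝ) (hA : 0 ≤ A) (hB : 0 ≤ B)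
    (hgrowth : ∀ x y : ℝ, |f x y| ≤ A + B * |x|) :
    ∃ c₁ c₂ : ℝ, ∀ x y : ℝ, f x y = c₁ + c₂ * x :=
  periodic_harmonic_linear_growth_general f hreg hharm hper A B hgrowth
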